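/- arXiv:2507.22200 — 4 statements merged into one kernel-verified Lean document; each statement's English description precedes it below -/
import Mathlib

section
/- Let H be a real symmetric n×n matrix strictly supported on the connected graph G, let λ ∈ ℝ and ψ ∈ ℝ^V satisfy Hψ = λψ with dim ker(H − λI) = 1 and ψ_r ≠ 0 for every vertex r, and let C be a frame for the cycle space Z. Then the symmetric block matrix M = [[Φ, C],[C^⊤, 0_β]] is invertible, i.e., n_0(M) = 0. -/
open Matrix

/-- A finite simple graph with a chosen orientation of each edge:
`E` is the edge index type, each edge `e` goes from `src e` to `tgt e`. -/
structure OrientedGraph (V E : Type*) where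
  src : E → V
  tgt : E → V
  loopless : ∀ e, src e ≠ tgt e
  edgeInj : ∀ e f, (src e = src f ∧ tgt e = tgt f) ∨ (src e = tgt f ∧ tgt e = src f) → e = f

/-- The underlying simple graph: `r` and `s` are adjacent iff some oriented edge joins them. -/
def OrientedGraph.toSimpleGraph {V E : Type*} (G : OrientedGraph V E) : SimpleGraph V where
  Adj r s := ∃ e, (G.src e = r ∧ G.tgt e = s) ∨ (G.src e = s ∧ G.tgt e = r)
  symm := by
    constructor
    intro r s h
    obtain ⟨e, h⟩ := h
    exact ⟨e, h.symm⟩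
  loopless := by
    constructor
    intro r h
    obtain ⟨e, h⟩ := h
    rcases h with ⟨h1, h2⟩ | ⟨h1, h2⟩ <;> exact G.loopless e (h1.trans h2.symm)

/-- `H` is strictly supported on `G`: off-diagonal entries are nonzero exactly on edges. -/
def OrientedGraph.StrictSupport {V E : Type*} (G : OrientedGraph V E)
    (H : Matrix V V ℝ) : Prop :=
  ∀ r s, r ≠ s → (H r s ≠ 0 ↔ G.toSimpleGraph.Adj r s)

/-- `H` is supported on `G`: off-diagonal nonzero entries occur only on edges. -/
def OrientedGraph.Support {V E : Type*} (G : OrientedGraph V E)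
    (H : Matrix V V ℝ) : Prop :=
  ∀ r s, r ≠ s → H r s ≠ 0 → G.toSimpleGraph.Adj r s

/-- The coboundary map `d : ℝ^V → ℝ^E`, `(dθ)_{(r→s)} = θ_s - θ_r`, as an `E × V` matrix. -/
def OrientedGraph.cob {V E : Type*} [DecidableEq V] (G : OrientedGraph V E) :
    Matrix E V ℝ :=
  Matrix.of fun e v => (if G.tgt e = v then (1 : ℝ) else 0) - (if G.src e = v then (1 : ℝ) else 0)

/-- The cycle space `Z = ker dᵀ ⊆ ℝ^E`. -/
noncomputable def OrientedGraph.cycleSpace {V E : Type*} [Fintype V] [Fintype E]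
    [DecidableEq V] (G : OrientedGraph V E) : Submodule ℝ (E → ℝ) :=
  LinearMap.ker (G.cob)ᵀ.mulVecLin

/-- The diagonal matrix `Φ` on `ℝ^E` with entries `Φ_{(r→s)} = -ψ_r H_{rs} ψ_s`. -/
noncomputable def PhiMat {V E : Type*} [DecidableEq E] (G : OrientedGraph V E)
    (H : Matrix V V ℝ) (ψ : V → ℝ) : Matrix E E ℝ :=
  Matrix.diagonal fun e => -(ψ (G.src e) * H (G.src e) (G.tgt e) * ψ (G.tgt e))

/-- The nodal count `ν(ψ,H) = #{(r→s) ∈ E : ψ_r H_{rs} ψ_s > 0}`. -/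
noncomputable def nodalCount {V E : Type*} (G : OrientedGraph V E)
    (H : Matrix V V ℝ) (ψ : V → ℝ) : ℕ :=
  Nat.card {e : E // 0 < ψ (G.src e) * H (G.src e) (G.tgt e) * ψ (G.tgt e)}

/-- `C` is a frame for the cycle space: its columns form a basis of `Z`. -/
def IsFrame {V E : Type*} [Fintype V] [Fintype E] [DecidableEq V]
    (G : OrientedGraph V E) {β : ℕ} (C : Matrix E (Fin β) ℝ) : Prop :=
  LinearMap.ker C.mulVecLin = ⊥ ∧ LinearMap.range C.mulVecLin = G.cycleSpace

/-- `n₋(A)`: the number of negative eigenvalues (with multiplicity) of a hermitian matrix. -/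
noncomputable def negEig {𝕜 : Type*} [RCLike 𝕜] {m : Type*} [Fintype m] [DecidableEq m]
    (A : Matrix m m 𝕜) : ℕ :=
  if h : A.IsHermitian then Nat.card {i // h.eigenvalues i < 0} else 0

/-- `n₊(A)`: the number of positive eigenvalues (with multiplicity) of a hermitian matrix. -/
noncomputable def posEig {𝕜 : Type*} [RCLike 𝕜] {m : Type*} [Fintype m] [DecidableEq m]
    (A : Matrix m m 𝕜) : ℕ :=
  if h : A.IsHermitian then Nat.card {i // 0 < h.eigenvalues i} else 0

/-- `n₀(A)`: the number of zero eigenvalues of a hermitian matrix, i.e. `dim ker A`. -/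
noncomputable def zeroEig {𝕜 : Type*} [RCLike 𝕜] {m : Type*} [Fintype m] [DecidableEq m]
    (A : Matrix m m 𝕜) : ℕ :=
  Module.finrank 𝕜 (LinearMap.ker A.mulVecLin)

/-- `n₋([A]_W)`: the Morse index (number of negative eigenvalues) of the compression of
a hermitian matrix `A` to the subspace `W`, i.e. the maximal dimension of a subspace of `W`
on which the hermitian form of `A` is negative definite. -/
noncomputable def negIndexOn {𝕜 : Type*} [RCLike 𝕜] {m : Type*} [Fintype m]
    (A : Matrix m m 𝕜) (W : Submodule 𝕜 (m → 𝕜)) : ℕ :=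
  sSup {k : ℕ | ∃ U : Submodule 𝕜 (m → 𝕜), U ≤ W ∧ Module.finrank 𝕜 U = k ∧
    ∀ x ∈ U, x ≠ 0 → RCLike.re (star x ⬝ᵥ A.mulVec x) < 0}

/-- `n₊([A]_W)`: the number of positive eigenvalues of the compression of a hermitian
matrix `A` to the subspace `W`. -/
noncomputable def posIndexOn {𝕜 : Type*} [RCLike 𝕜] {m : Type*} [Fintype m]
    (A : Matrix m m 𝕜) (W : Submodule 𝕜 (m → 𝕜)) : ℕ :=
  sSup {k : ℕ | ∃ U : Submodule 𝕜 (m → 𝕜), U ≤ W ∧ Module.finrank 𝕜 U = k ∧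
    ∀ x ∈ U, x ≠ 0 → 0 < RCLike.re (star x ⬝ᵥ A.mulVec x)}

/-- The linear functional `x ↦ v ⬝ᵥ x`. -/
noncomputable def dotLeft {𝕜 : Type*} [RCLike 𝕜] {m : Type*} [Fintype m] (v : m → 𝕜) :
    (m → 𝕜) →ₗ[𝕜] 𝕜 where
  toFun x := v ⬝ᵥ x
  map_add' x y := by simp [dotProduct_add]
  map_smul' c x := by simp [dotProduct_smul]

/-- `n₀([A]_W)`: the dimension of the kernel of the compression of `A` to `W`,
i.e. of `{x ∈ W : Ax ⊥ W}`. -/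
noncomputable def zeroIndexOn {𝕜 : Type*} [RCLike 𝕜] {m : Type*} [Fintype m]
    (A : Matrix m m 𝕜) (W : Submodule 𝕜 (m → 𝕜)) : ℕ :=
  Module.finrank 𝕜
    ↥(W ⊓ ⨅ y : W, LinearMap.ker ((dotLeft (star (y : m → 𝕜))).comp A.mulVecLin))

/-- Extension of `α ∈ ℝ^E` to an antisymmetric function on pairs of vertices:
`α_{rs} = α_e` if `e = (r→s) ∈ E`, `α_{rs} = -α_e` if `e = (s→r) ∈ E`, and `0` otherwise. -/
noncomputable def alphaExt {V E : Type*} [Fintype E] [DecidableEq V]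
    (G : OrientedGraph V E) (α : E → ℝ) (r s : V) : ℝ :=
  ∑ e : E, ((if G.src e = r ∧ G.tgt e = s then α e else 0) -
            (if G.src e = s ∧ G.tgt e = r then α e else 0))

/-- The phase-perturbed matrix `H_α` with `(H_α)_{rs} = e^{iα_{rs}} H_{rs}` for `r ≠ s`. -/
noncomputable def phaseMat {V E : Type*} [Fintype E] [DecidableEq V]
    (G : OrientedGraph V E) (H : Matrix V V ℝ) (α : E → ℝ) : Matrix V V ℂ :=
  Matrix.of fun r s =>
    if r = s then (H r r : ℂ)
    else Complex.exp (Complex.I * (alphaExt G α r s : ℂ)) * (H r s : ℂ)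

/-!
If `M (x, y) = 0`, then `Cᵀ x = 0` puts `x` in `Z^⊥ = im d`, say `x = d θ`, and applying `dᵀ`
to `Φ x + C y = 0` kills `C y` (as `im C = Z = ker dᵀ`), leaving `dᵀ Φ d θ = 0`. Since `ψ` is an
eigenvector of `H`, `dᵀ Φ d = D_ψ (H - λ) D_ψ` with `D_ψ = diag ψ`, so `ψ θ ∈ ker (H - λ) = ℝ ψ`.
Hence `θ` is constant, `x = d θ = 0`, and then `C y = 0` forces `y = 0`.
-/

namespace Matrix

variable {K m n p : Type*} [Field K] [Fintype m] [Fintype n] [Fintype p]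
  [DecidableEq m] [DecidableEq n]

theorem mem_range_mulVecLin_of_forall_dotProduct_eq_zero (B : Matrix m n K) {x : m → K}
    (hx : ∀ z, Bᵀ *ᵥ z = 0 → z ⬝ᵥ x = 0) : x ∈ LinearMap.range B.mulVecLin := by
  rw [← Subspace.forall_mem_dualAnnihilator_apply_eq_zero_iff]
  intro φ hφ
  obtain ⟨z, rfl⟩ := (dotProductEquiv K m).surjective φ
  refine hx z (funext fun i => ?_)
  rw [mulVec_transpose, ← dotProduct_single_one (z ᵥ* B) i, ← dotProduct_mulVec]
  exact (Submodule.mem_dualAnnihilator _).1 hφ _ (LinearMap.mem_range_self _ _)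

theorem ker_mulVecLin_fromBlocks_eq_bot (Φ : Matrix m m K) (C : Matrix m p K) (d : Matrix m n K)
    (hC_inj : LinearMap.ker C.mulVecLin = ⊥)
    (hC_range : LinearMap.range C.mulVecLin = LinearMap.ker dᵀ.mulVecLin)
    (hΦ : ∀ θ, dᵀ *ᵥ (Φ *ᵥ (d *ᵥ θ)) = 0 → d *ᵥ θ = 0) :
    LinearMap.ker (fromBlocks Φ C Cᵀ 0).mulVecLin = ⊥ := by
  rw [LinearMap.ker_eq_bot']
  intro w hw
  obtain ⟨x, y, rfl⟩ : ∃ x y, w = Sum.elim x y := ⟨_, _, (Sum.elim_comp_inl_inr w).symm⟩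
  rw [mulVecLin_apply, fromBlocks_mulVec, Sum.elim_comp_inl, Sum.elim_comp_inr,
    zero_mulVec, add_zero, ← Sum.elim_zero_zero, Sum.elim_eq_iff] at hw
  obtain ⟨hΦC, hCx⟩ := hw
  have hdC : dᵀ *ᵥ (C *ᵥ y) = 0 := by
    rw [← mulVecLin_apply dᵀ, ← LinearMap.mem_ker, ← hC_range]
    exact LinearMap.mem_range_self _ y
  obtain ⟨θ, rfl⟩ : x ∈ LinearMap.range d.mulVecLin := by
    refine mem_range_mulVecLin_of_forall_dotProduct_eq_zero d fun z hz => ?_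
    obtain ⟨u, rfl⟩ : z ∈ LinearMap.range C.mulVecLin := by rwa [hC_range]
    rw [mulVecLin_apply, dotProduct_comm, dotProduct_mulVec, ← mulVec_transpose, hCx,
      zero_dotProduct]
  rw [mulVecLin_apply] at hΦC
  have hx : d *ᵥ θ = 0 := hΦ θ (by simpa [mulVec_add, hdC] using congrArg (dᵀ *ᵥ ·) hΦC)
  rw [hx, mulVec_zero, zero_add] at hΦC
  have hy : y ∈ LinearMap.ker C.mulVecLin := hΦC
  rw [hC_inj, Submodule.mem_bot] at hy
  simp [hx, hy]

end Matrix

namespace OrientedGraph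

variable {V E : Type*} (G : OrientedGraph V E)

theorem cob_mulVec_apply [Fintype V] [DecidableEq V] (θ : V → ℝ) (e : E) :
    (G.cob *ᵥ θ) e = θ (G.tgt e) - θ (G.src e) := by
  simp [mulVec, dotProduct, cob, sub_mul, Finset.sum_sub_distrib]

theorem eq_of_endpoints {e f : E} {r s : V}
    (he : (G.src e = r ∧ G.tgt e = s) ∨ (G.src e = s ∧ G.tgt e = r))
    (hf : (G.src f = r ∧ G.tgt f = s) ∨ (G.src f = s ∧ G.tgt f = r)) : e = f :=
  G.edgeInj e f (by grind)

theorem sum_indicator_endpoints_of_adj [Fintype E] [DecidableEq V] {v s : V}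
    (hadj : G.toSimpleGraph.Adj v s) :
    ∑ e, ((if G.src e = s ∧ G.tgt e = v then (1 : ℝ) else 0) +
      (if G.src e = v ∧ G.tgt e = s then 1 else 0)) = 1 := by
  obtain ⟨e₀, he₀⟩ := hadj
  rw [Finset.sum_eq_single e₀]
  · have := G.loopless e₀
    grind
  · intro e _ hne
    rw [if_neg fun h => hne (G.eq_of_endpoints (Or.inr h) he₀),
      if_neg fun h => hne (G.eq_of_endpoints (Or.inl h) he₀), add_zero]
  · simp

theorem cob_transpose_mulVec_of_antisymm [Fintype V] [Fintype E] [DecidableEq V]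
    (f : V → V → ℝ) (hf : ∀ r s, f s r = -f r s) (v : V)
    (hf_adj : ∀ s, ¬G.toSimpleGraph.Adj v s → f s v = 0) :
    (G.cobᵀ *ᵥ fun e => f (G.src e) (G.tgt e)) v = ∑ s, f s v := by
  calc (G.cobᵀ *ᵥ fun e => f (G.src e) (G.tgt e)) v
      = ∑ e, ∑ s, ((if G.src e = s ∧ G.tgt e = v then (1 : ℝ) else 0) +
          (if G.src e = v ∧ G.tgt e = s then 1 else 0)) * f s v := by
        refine Finset.sum_congr rfl fun e _ => ?_
        have := G.loopless e
        by_cases ht : G.tgt e = v <;> by_cases hs : G.src e = v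
        · grind
        · simp [cob, ht, hs]
        · simpa [cob, ht, hs] using (hf v (G.tgt e)).symm
        · simp [cob, ht, hs]
    _ = ∑ s, f s v := by
        rw [Finset.sum_comm]
        refine Finset.sum_congr rfl fun s _ => ?_
        by_cases hadj : G.toSimpleGraph.Adj v s
        · rw [← Finset.sum_mul, G.sum_indicator_endpoints_of_adj hadj, one_mul]
        · simp [hf_adj s hadj]

variable [Fintype V] [Fintype E] [DecidableEq V] [DecidableEq E]
  {H : Matrix V V ℝ} {lam : ℝ} {ψ : V → ℝ}

theorem cob_transpose_PhiMat_cob_mulVec (hsymm : H.IsSymm) (hsupp : G.Support H)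
    (heig : H *ᵥ ψ = lam • ψ) (θ : V → ℝ) :
    G.cobᵀ *ᵥ (PhiMat G H ψ *ᵥ (G.cob *ᵥ θ)) = ψ * ((H - lam • 1) *ᵥ (ψ * θ)) := by
  set f : V → V → ℝ := fun r s => ψ r * H r s * ψ s * (θ r - θ s)
  have hflow : PhiMat G H ψ *ᵥ (G.cob *ᵥ θ) = fun e => f (G.src e) (G.tgt e) := by
    ext e
    rw [PhiMat, mulVec_diagonal, cob_mulVec_apply]
    ring
  have hf : ∀ r s, f s r = -f r s := fun r s => by
    simp only [f, hsymm.apply]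
    ring
  have hf_adj : ∀ v s, ¬G.toSimpleGraph.Adj v s → f s v = 0 := fun v s hadj => by
    by_cases hvs : v = s
    · simp [f, hvs]
    · simp [f, hsymm.apply, not_not.1 (mt (hsupp v s hvs) hadj)]
  ext v
  rw [hflow, G.cob_transpose_mulVec_of_antisymm f hf v (hf_adj v)]
  have hψv : ∑ s, H v s * ψ s = lam * ψ v := congrFun heig v
  calc ∑ s, f s v = ψ v * ∑ s, H v s * (ψ s * θ s) - ψ v * θ v * ∑ s, H v s * ψ s := by
        simp only [f, Finset.mul_sum, ← Finset.sum_sub_distrib, hsymm.apply]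
        exact Finset.sum_congr rfl fun s _ => by ring
    _ = ψ v * ((H - lam • 1) *ᵥ (ψ * θ)) v := by
        rw [hψv, sub_mulVec, smul_mulVec, one_mulVec]
        simp only [Pi.sub_apply, Pi.smul_apply, Pi.mul_apply, smul_eq_mul, mulVec, dotProduct]
        ring

theorem cob_mulVec_eq_zero_of_cob_transpose_PhiMat_cob_mulVec_eq_zero (hsymm : H.IsSymm)
    (hsupp : G.Support H) (heig : H *ᵥ ψ = lam • ψ)
    (hker : Module.finrank ℝ (LinearMap.ker (H - lam • (1 : Matrix V V ℝ)).mulVecLin) = 1)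
    (hψ : ∀ r, ψ r ≠ 0) {θ : V → ℝ} (hθ : G.cobᵀ *ᵥ (PhiMat G H ψ *ᵥ (G.cob *ᵥ θ)) = 0) :
    G.cob *ᵥ θ = 0 := by
  have hψθ : (H - lam • 1) *ᵥ (ψ * θ) = 0 := by
    rw [G.cob_transpose_PhiMat_cob_mulVec hsymm hsupp heig] at hθ
    exact funext fun v => (mul_eq_zero.1 (congrFun hθ v)).resolve_left (hψ v)
  have hψ_ker : (H - lam • 1) *ᵥ ψ = 0 := by
    rw [sub_mulVec, heig, smul_mulVec, one_mulVec, sub_self]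
  have : Nonempty V := by
    have hpos := Submodule.finrank_le (LinearMap.ker (H - lam • (1 : Matrix V V ℝ)).mulVecLin)
    rw [hker, Module.finrank_fintype_fun_eq_card] at hpos
    exact Fintype.card_pos_iff.1 hpos
  have hψ_ne : (⟨ψ, hψ_ker⟩ : LinearMap.ker (H - lam • (1 : Matrix V V ℝ)).mulVecLin) ≠ 0 :=
    fun h => hψ (Classical.arbitrary V) (congrFun (congrArg Subtype.val h) _)
  obtain ⟨c, hc⟩ := (finrank_eq_one_iff_of_nonzero' _ hψ_ne).1 hker ⟨ψ * θ, hψθ⟩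
  have hθc : ∀ v, θ v = c := fun v => by
    have hv : c * ψ v = ψ v * θ v := congrFun (congrArg Subtype.val hc) v
    exact mul_left_cancel₀ (hψ v) (hv.symm.trans (mul_comm _ _))
  ext e
  simp [cob_mulVec_apply, hθc]

end OrientedGraph

theorem block_matrix_invertible_general
    {V E : Type*} [Fintype V] [Fintype E] [DecidableEq V] [DecidableEq E]
    (G : OrientedGraph V E)
    (H : Matrix V V ℝ) (hsymm : H.IsSymm) (hsupp : G.StrictSupport H)
    (lam : ℝ) (ψ : V → ℝ) (heig : H.mulVec ψ = lam • ψ)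
    (hker : Module.finrank ℝ (LinearMap.ker (H - lam • (1 : Matrix V V ℝ)).mulVecLin) = 1)
    (hψ : ∀ r, ψ r ≠ 0)
    {β : ℕ} (C : Matrix E (Fin β) ℝ) (hC : IsFrame G C) :
    zeroEig (Matrix.fromBlocks (PhiMat G H ψ) C Cᵀ (0 : Matrix (Fin β) (Fin β) ℝ)) = 0 := by
  have hsupp' : G.Support H := fun r s hrs => (hsupp r s hrs).1
  rw [zeroEig, Submodule.finrank_eq_zero]
  exact Matrix.ker_mulVecLin_fromBlocks_eq_bot _ C G.cob hC.1 hC.2 fun θ hθ =>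
    G.cob_mulVec_eq_zero_of_cob_transpose_PhiMat_cob_mulVec_eq_zero hsymm hsupp' heig hker hψ hθ

/-- the block matrix `M = [[Φ, C],[Cᵀ, 0]]` is invertible: `n₀(M) = 0`. -/
theorem block_matrix_invertible
    {V E : Type*} [Fintype V] [Fintype E] [DecidableEq V] [DecidableEq E]
    (G : OrientedGraph V E) (hconn : G.toSimpleGraph.Connected)
    (H : Matrix V V ℝ) (hsymm : H.IsSymm) (hsupp : G.StrictSupport H)
    (lam : ℝ) (ψ : V → ℝ) (heig : H.mulVec ψ = lam • ψ)
    (hker : Module.finrank ℝ (LinearMap.ker (H - lam • (1 : Matrix V V ℝ)).mulVecLin) = 1)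
    (hψ : ∀ r, ψ r ≠ 0)
    {β : ℕ} (C : Matrix E (Fin β) ℝ) (hC : IsFrame G C) :
    zeroEig (Matrix.fromBlocks (PhiMat G H ψ) C Cᵀ (0 : Matrix (Fin β) (Fin β) ℝ)) = 0 :=
  block_matrix_invertible_general G H hsymm hsupp lam ψ heig hker hψ C hC
end

section
/- (Directional magnetic Hessian of a simple eigenvalue.) Let H be a real symmetric n×n matrix strictly supported on the connected graph G, let λ ∈ ℝ and ψ ∈ ℝ^V satisfy Hψ = λψ with ‖ψ‖ = 1, dim ker(H − λI) = 1, and ψ_r ≠ 0 for every vertex r. Let α ∈ ℝ^E with Φα ∈ Z = ker(d^⊤). Suppose μ:(−ε,ε)→ℝ and v:(−ε,ε)→ℂ^V are twice differentiable with H_{tα} v(t) = μ(t) v(t) for all t, μ(0) = λ, and v(0) = ψ. Then μ'(0) = 0 and μ''(0) = 2 α^⊤ Φ α. -/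
open Matrix

/-!
Pair the eigenvalue equation `H_{tα} v(t) = μ(t) v(t)` with the real vector `ψ` through the
bilinear (not sesquilinear) dot product. Since `ψ` is a left eigenvector of `H_0 = H`,
differentiating `ψᵀ H_{tα} v(t) = μ(t) ψᵀ v(t)` once and twice at `0` gives the perturbation
formulas `μ' = ψᵀ H' ψ` and `μ'' = ψᵀ H'' ψ + 2 ψᵀ H' v' - 2 μ' ψᵀ v'`, where
`H'_{rs} = i α_{rs} H_{rs}` and `H''_{rs} = -α_{rs}² H_{rs}`. The condition `Φα ∈ ker dᵀ`, read at
the vertex `r` and divided by `ψ_r ≠ 0`, says `∑_s α_{rs} H_{rs} ψ_s = 0`, i.e. `H' ψ = 0`; as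
`H'` is antisymmetric, also `ψᵀ H' = 0`. So `μ'(0) = 0` and
`μ''(0) = -∑_{r,s} α_{rs}² ψ_r H_{rs} ψ_s = 2 αᵀ Φ α`.
-/

open Filter Topology

section Perturbation

variable {𝕜 ι : Type*} [NontriviallyNormedField 𝕜] [Fintype ι]

theorem HasDerivAt.dotProduct {𝔸 : Type*} [NormedRing 𝔸] [NormedAlgebra 𝕜 𝔸]
    {x y : 𝕜 → ι → 𝔸} {x' y' : ι → 𝔸} {t : 𝕜}
    (hx : HasDerivAt x x' t) (hy : HasDerivAt y y' t) :
    HasDerivAt (fun t => x t ⬝ᵥ y t) (x' ⬝ᵥ y t + x t ⬝ᵥ y') t := by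
  show HasDerivAt (fun t => ∑ i, x t i * y t i) (∑ i, x' i * y t i + ∑ i, x t i * y' i) t
  rw [← Finset.sum_add_distrib]
  exact HasDerivAt.fun_sum fun i _ => (hasDerivAt_pi.1 hx i).fun_mul (hasDerivAt_pi.1 hy i)

theorem Filter.EventuallyEq.eventuallyEq_of_hasDerivAt {F : Type*} [NormedAddCommGroup F]
    [NormedSpace 𝕜 F] {f g f' g' : 𝕜 → F} {a : 𝕜} (h : f =ᶠ[𝓝 a] g)
    (hf : ∀ᶠ t in 𝓝 a, HasDerivAt f (f' t) t) (hg : ∀ᶠ t in 𝓝 a, HasDerivAt g (g' t) t) :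
    f' =ᶠ[𝓝 a] g' := by
  filter_upwards [h.eventuallyEq_nhds, hf, hg] with t hfg hft hgt
  exact hft.unique (hgt.congr_of_eventuallyEq hfg)

theorem eigenvalue_derivs_of_leftEigenvector {𝔸 : Type*} [NormedCommRing 𝔸]
    [NormedAlgebra 𝕜 𝔸] {c v c₁ v₁ : 𝕜 → ι → 𝔸} {c₂ v₂ : ι → 𝔸} {μ μ₁ : 𝕜 → 𝔸} {μ₂ : 𝔸}
    {w : ι → 𝔸}
    (hc : ∀ᶠ t in 𝓝 0, HasDerivAt c (c₁ t) t) (hc₁ : HasDerivAt c₁ c₂ 0)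
    (hv : ∀ᶠ t in 𝓝 0, HasDerivAt v (v₁ t) t) (hv₁ : HasDerivAt v₁ v₂ 0)
    (hμ : ∀ᶠ t in 𝓝 0, HasDerivAt μ (μ₁ t) t) (hμ₁ : HasDerivAt μ₁ μ₂ 0)
    (heig : ∀ᶠ t in 𝓝 0, c t ⬝ᵥ v t = μ t * (w ⬝ᵥ v t))
    (hc0 : c 0 = μ 0 • w) (hw : w ⬝ᵥ v 0 = 1) :
    μ₁ 0 = c₁ 0 ⬝ᵥ v 0 ∧
      μ₂ = c₂ ⬝ᵥ v 0 + 2 * (c₁ 0 ⬝ᵥ v₁ 0) - 2 * μ₁ 0 * (w ⬝ᵥ v₁ 0) := by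
  have hdot_w {u : 𝕜 → ι → 𝔸} {u' : ι → 𝔸} {t : 𝕜} (hu : HasDerivAt u u' t) :
      HasDerivAt (fun t => w ⬝ᵥ u t) (w ⬝ᵥ u') t := by
    simpa using (hasDerivAt_const t w).dotProduct hu
  have hderiv : (fun t => c₁ t ⬝ᵥ v t + c t ⬝ᵥ v₁ t) =ᶠ[𝓝 0]
      fun t => μ₁ t * (w ⬝ᵥ v t) + μ t * (w ⬝ᵥ v₁ t) := by
    refine Filter.EventuallyEq.eventuallyEq_of_hasDerivAt (f := fun t => c t ⬝ᵥ v t)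
      (g := fun t => μ t * (w ⬝ᵥ v t)) heig ?_ ?_
    · filter_upwards [hc, hv] with t hct hvt using hct.dotProduct hvt
    · filter_upwards [hμ, hv] with t hμt hvt using hμt.fun_mul (hdot_w hvt)
  have hsecond := ((hc₁.dotProduct hv.self_of_nhds).add (hc.self_of_nhds.dotProduct hv₁)).unique
    (((hμ₁.fun_mul (hdot_w hv.self_of_nhds)).add
      (hμ.self_of_nhds.fun_mul (hdot_w hv₁))).congr_of_eventuallyEq hderiv)
  have hfirst := hderiv.self_of_nhds
  simp only [hc0, hw, smul_dotProduct, smul_eq_mul] at hfirst hsecond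
  constructor
  · linear_combination -hfirst
  · linear_combination -hsecond

end Perturbation

section PhaseMatrix

variable {V : Type*}

noncomputable def phaseDerivMat (K M : Matrix V V ℝ) (n : ℕ) (t : ℝ) : Matrix V V ℂ :=
  of fun r s => (Complex.I * K r s) ^ n * Complex.exp (Complex.I * (t * K r s)) * M r s

theorem phaseDerivMat_zero_apply (K M : Matrix V V ℝ) (n : ℕ) (r s : V) :
    phaseDerivMat K M n 0 r s = (Complex.I * K r s) ^ n * M r s := by
  simp [phaseDerivMat]

theorem phaseDerivMat_zero_zero (K M : Matrix V V ℝ) :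
    phaseDerivMat K M 0 0 = M.map (↑) := by
  ext r s
  simp [phaseDerivMat_zero_apply]

theorem hasDerivAt_vecMul_phaseDerivMat [Fintype V] (K M : Matrix V V ℝ) (n : ℕ) (x : V → ℂ)
    (t : ℝ) :
    HasDerivAt (fun t => x ᵥ* phaseDerivMat K M n t) (x ᵥ* phaseDerivMat K M (n + 1) t) t := by
  refine hasDerivAt_pi.2 fun s => ?_
  simp only [vecMul, dotProduct, phaseDerivMat, of_apply]
  refine HasDerivAt.fun_sum fun r _ => ?_
  have hphase : HasDerivAt (fun t : ℝ => Complex.exp (Complex.I * (t * K r s)))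
      (Complex.I * K r s * Complex.exp (Complex.I * (t * K r s))) t := by
    simpa [mul_comm] using
      (((hasDerivAt_id t).ofReal_comp.mul_const (K r s : ℂ)).const_mul Complex.I).cexp
  exact (((hphase.const_mul (x r * (Complex.I * K r s) ^ n)).mul_const (M r s : ℂ)).congr_deriv
    (by ring)).congr_of_eventuallyEq (.of_forall fun t => by ring)

theorem vecMul_phaseDerivMat_zero_zero [Fintype V] [DecidableEq V] (K : Matrix V V ℝ)
    {H : Matrix V V ℝ} (hsymm : H.IsSymm) {lam : ℝ} {ψ : V → ℝ} (heig : H *ᵥ ψ = lam • ψ) :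
    (fun r => (ψ r : ℂ)) ᵥ* phaseDerivMat K H 0 0 = (lam : ℂ) • fun r => (ψ r : ℂ) := by
  ext s
  have hcast := RingHom.map_vecMul Complex.ofRealHom H ψ s
  rw [← mulVec_transpose, hsymm.eq, heig] at hcast
  rw [phaseDerivMat_zero_zero]
  exact hcast.symm.trans (by simp)

end PhaseMatrix

section MagneticPhase

variable {V E : Type*} [Fintype E] [DecidableEq V] (G : OrientedGraph V E)

theorem alphaExt_smul (α : E → ℝ) (t : ℝ) (r s : V) :
    alphaExt G (t • α) r s = t * alphaExt G α r s := by
  simp [alphaExt, Finset.mul_sum, mul_sub, mul_ite]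

theorem alphaExt_swap (α : E → ℝ) (r s : V) : alphaExt G α s r = -alphaExt G α r s := by
  simp only [alphaExt, ← Finset.sum_neg_distrib, neg_sub]

theorem alphaExt_self (α : E → ℝ) (r : V) : alphaExt G α r r = 0 := by
  simp [alphaExt]

theorem alphaExt_src_tgt (α : E → ℝ) (e : E) : alphaExt G α (G.src e) (G.tgt e) = α e := by
  classical
  have hterm (f : E) : ((if G.src f = G.src e ∧ G.tgt f = G.tgt e then α f else 0) -
      (if G.src f = G.tgt e ∧ G.tgt f = G.src e then α f else 0)) = if f = e then α f else 0 := by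
    rcases eq_or_ne f e with rfl | hfe
    · simp [G.loopless f]
    · rw [if_neg fun h => hfe (G.edgeInj f e (.inl h)),
        if_neg fun h => hfe (G.edgeInj f e (.inr h)), if_neg hfe, sub_zero]
  simp only [alphaExt, hterm, Finset.sum_ite_eq', Finset.mem_univ, if_true]

theorem phaseMat_smul (H : Matrix V V ℝ) (α : E → ℝ) (t : ℝ) :
    phaseMat G H (t • α) = phaseDerivMat (of (alphaExt G α)) H 0 t := by
  ext r s
  rcases eq_or_ne r s with rfl | hrs
  · simp [phaseMat, phaseDerivMat, alphaExt_self]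
  · simp [phaseMat, phaseDerivMat, hrs, alphaExt_smul, mul_comm]

variable [Fintype V]

theorem sum_alphaExt_mul (α : E → ℝ) (r : V) (F : V → ℝ) :
    ∑ s, alphaExt G α r s * F s =
      ∑ e, α e * ((if G.src e = r then F (G.tgt e) else 0) -
        (if G.tgt e = r then F (G.src e) else 0)) := by
  simp only [alphaExt, Finset.sum_mul, sub_mul, ite_mul, zero_mul]
  rw [Finset.sum_comm]
  refine Finset.sum_congr rfl fun e _ => ?_
  rw [Finset.sum_sub_distrib]
  by_cases h1 : G.src e = r <;> by_cases h2 : G.tgt e = r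
  · exact absurd (h1.trans h2.symm) (G.loopless e)
  all_goals simp [h1, h2]

theorem sum_sum_alphaExt_mul (α : E → ℝ) (F : V → V → ℝ) :
    ∑ r, ∑ s, alphaExt G α r s * F r s =
      ∑ e, α e * (F (G.src e) (G.tgt e) - F (G.tgt e) (G.src e)) := by
  simp only [sum_alphaExt_mul]
  rw [Finset.sum_comm]
  refine Finset.sum_congr rfl fun e _ => ?_
  simp [mul_sub, Finset.sum_sub_distrib, mul_ite]

theorem sum_alphaExt_mul_eq_zero_of_mem_cycleSpace {H : Matrix V V ℝ} (hsymm : H.IsSymm)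
    {ψ : V → ℝ} (hψ : ∀ r, ψ r ≠ 0) {α : E → ℝ} [DecidableEq E]
    (hα : (PhiMat G H ψ).mulVec α ∈ G.cycleSpace) (r : V) :
    ∑ s, alphaExt G α r s * (H r s * ψ s) = 0 := by
  have hΦ : PhiMat G H ψ *ᵥ α =
      fun e => -(ψ (G.src e) * H (G.src e) (G.tgt e) * ψ (G.tgt e)) * α e :=
    funext fun e => mulVec_diagonal _ _ e
  have hrow := congrFun (LinearMap.mem_ker.1 hα) r
  simp only [Matrix.mulVecLin_apply, hΦ, mulVec, dotProduct, transpose_apply,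
    OrientedGraph.cob, of_apply, Pi.zero_apply] at hrow
  refine (mul_eq_zero.1 ?_).resolve_left (hψ r)
  rw [sum_alphaExt_mul, Finset.mul_sum]
  refine (Finset.sum_congr rfl fun e _ => ?_).trans hrow
  by_cases h1 : G.src e = r <;> by_cases h2 : G.tgt e = r
  · exact absurd (h1.trans h2.symm) (G.loopless e)
  · subst h1; simp [h2]; ring
  · subst h2; simp [h1, hsymm.apply (G.src e) (G.tgt e)]; ring
  · simp [h1, h2]

theorem vecMul_phaseDerivMat_one_eq_zero {H : Matrix V V ℝ} (hsymm : H.IsSymm)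
    {ψ : V → ℝ} (hψ : ∀ r, ψ r ≠ 0) {α : E → ℝ} [DecidableEq E]
    (hα : (PhiMat G H ψ).mulVec α ∈ G.cycleSpace) :
    (fun r => (ψ r : ℂ)) ᵥ* phaseDerivMat (of (alphaExt G α)) H 1 0 = 0 := by
  ext s
  have hcol : ∑ r, ψ r * (alphaExt G α r s * H r s) = 0 := by
    rw [← neg_eq_zero, ← sum_alphaExt_mul_eq_zero_of_mem_cycleSpace G hsymm hψ hα s,
      ← Finset.sum_neg_distrib]
    refine Finset.sum_congr rfl fun r _ => ?_
    rw [alphaExt_swap G α s r, hsymm.apply r s]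
    ring
  calc ((fun r => (ψ r : ℂ)) ᵥ* phaseDerivMat (of (alphaExt G α)) H 1 0) s
      = Complex.I * ((∑ r, ψ r * (alphaExt G α r s * H r s) : ℝ) : ℂ) := by
        simp only [vecMul, dotProduct, phaseDerivMat_zero_apply, of_apply, Complex.ofReal_sum,
          Complex.ofReal_mul, Finset.mul_sum]
        exact Finset.sum_congr rfl fun r _ => by ring
    _ = 0 := by rw [hcol, Complex.ofReal_zero, mul_zero]

theorem sum_sum_alphaExt_sq_mul {H : Matrix V V ℝ} (hsymm : H.IsSymm) (ψ : V → ℝ)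
    (α : E → ℝ) [DecidableEq E] :
    ∑ r, ∑ s, alphaExt G α r s ^ 2 * (ψ r * H r s * ψ s) =
      -2 * (α ⬝ᵥ PhiMat G H ψ *ᵥ α) := by
  simp only [sq, mul_assoc]
  rw [sum_sum_alphaExt_mul]
  simp only [dotProduct, PhiMat, mulVec_diagonal, Finset.mul_sum]
  refine Finset.sum_congr rfl fun e _ => ?_
  rw [alphaExt_src_tgt, alphaExt_swap, alphaExt_src_tgt, hsymm.apply (G.src e) (G.tgt e)]
  ring

theorem vecMul_phaseDerivMat_two_dotProduct {H : Matrix V V ℝ} (hsymm : H.IsSymm)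
    (ψ : V → ℝ) (α : E → ℝ) [DecidableEq E] :
    ((fun r => (ψ r : ℂ)) ᵥ* phaseDerivMat (of (alphaExt G α)) H 2 0) ⬝ᵥ (fun r => (ψ r : ℂ)) =
      ((2 * (α ⬝ᵥ PhiMat G H ψ *ᵥ α) : ℝ) : ℂ) := by
  rw [← neg_neg (2 * _), ← neg_mul, ← sum_sum_alphaExt_sq_mul G hsymm ψ α, Finset.sum_comm]
  simp only [vecMul, dotProduct, phaseDerivMat_zero_apply, of_apply, Finset.sum_mul,
    Complex.ofReal_neg, Complex.ofReal_sum, ← Finset.sum_neg_distrib, Complex.ofReal_mul,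
    Complex.ofReal_pow]
  refine Finset.sum_congr rfl fun s _ => Finset.sum_congr rfl fun r _ => ?_
  linear_combination (↑(alphaExt G α r s) ^ 2 * ↑(ψ r) * ↑(H r s) * ↑(ψ s) : ℂ) * Complex.I_sq

end MagneticPhase

theorem directional_magnetic_hessian_general
    {V E : Type*} [Fintype V] [Fintype E] [DecidableEq V] [DecidableEq E]
    (G : OrientedGraph V E)
    (H : Matrix V V ℝ) (hsymm : H.IsSymm)
    (lam : ℝ) (ψ : V → ℝ) (heig : H.mulVec ψ = lam • ψ)
    (hnorm : ψ ⬝ᵥ ψ = 1)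
    (hψ : ∀ r, ψ r ≠ 0)
    (α : E → ℝ) (hα : (PhiMat G H ψ).mulVec α ∈ G.cycleSpace)
    (ε : ℝ) (hε : 0 < ε) (μ : ℝ → ℝ) (v : ℝ → V → ℂ)
    (heigt : ∀ t ∈ Set.Ioo (-ε) ε,
      (phaseMat G H (t • α)).mulVec (v t) = μ t • v t)
    (hμ0 : μ 0 = lam) (hv0 : v 0 = fun r => (ψ r : ℂ))
    (hμd : ∀ t ∈ Set.Ioo (-ε) ε, DifferentiableAt ℝ μ t)
    (hμd2 : ∀ t ∈ Set.Ioo (-ε) ε, DifferentiableAt ℝ (deriv μ) t)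
    (hvd : ∀ t ∈ Set.Ioo (-ε) ε, DifferentiableAt ℝ v t)
    (hvd2 : ∀ t ∈ Set.Ioo (-ε) ε, DifferentiableAt ℝ (deriv v) t) :
    deriv μ 0 = 0 ∧ deriv (deriv μ) 0 = 2 * (α ⬝ᵥ (PhiMat G H ψ).mulVec α) := by
  set ψC : V → ℂ := fun r => (ψ r : ℂ)
  have hnear : ∀ᶠ t in 𝓝 (0 : ℝ), t ∈ Set.Ioo (-ε) ε := Ioo_mem_nhds (neg_neg_of_pos hε) hε
  have h0 : (0 : ℝ) ∈ Set.Ioo (-ε) ε := mem_of_mem_nhds hnear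
  have hpair : ∀ᶠ t in 𝓝 (0 : ℝ),
      (ψC ᵥ* phaseDerivMat (of (alphaExt G α)) H 0 t) ⬝ᵥ v t = μ t * (ψC ⬝ᵥ v t) := by
    filter_upwards [hnear] with t ht
    rw [← dotProduct_mulVec, ← phaseMat_smul, heigt t ht, dotProduct_smul, Complex.real_smul]
  have hnormC : ψC ⬝ᵥ v 0 = 1 := by
    rw [hv0]
    simp only [ψC, dotProduct] at hnorm ⊢
    exact_mod_cast hnorm
  obtain ⟨hfirst, hsecond⟩ := eigenvalue_derivs_of_leftEigenvector
    (c := fun t => ψC ᵥ* phaseDerivMat (of (alphaExt G α)) H 0 t) (μ := fun t => (μ t : ℂ))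
    (μ₁ := fun t => ((deriv μ t : ℝ) : ℂ))
    (.of_forall fun t => hasDerivAt_vecMul_phaseDerivMat _ _ 0 ψC t)
    (hasDerivAt_vecMul_phaseDerivMat _ _ 1 ψC 0)
    (hnear.mono fun t ht => (hvd t ht).hasDerivAt) (hvd2 0 h0).hasDerivAt
    (hnear.mono fun t ht => (hμd t ht).hasDerivAt.ofReal_comp) (hμd2 0 h0).hasDerivAt.ofReal_comp
    hpair (by rw [vecMul_phaseDerivMat_zero_zero _ hsymm heig, hμ0]) hnormC
  rw [vecMul_phaseDerivMat_one_eq_zero G hsymm hψ hα, zero_dotProduct] at hfirst hsecond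
  rw [hv0, vecMul_phaseDerivMat_two_dotProduct G hsymm ψ α, hfirst] at hsecond
  constructor
  · exact_mod_cast hfirst
  · simp only [mul_zero, add_zero, zero_mul, sub_zero] at hsecond
    exact_mod_cast hsecond

/-- directional magnetic Hessian of a simple eigenvalue:
if `Φα ∈ Z` then `μ'(0) = 0` and `μ''(0) = 2 αᵀ Φ α`. -/
theorem directional_magnetic_hessian
    {V E : Type*} [Fintype V] [Fintype E] [DecidableEq V] [DecidableEq E]
    (G : OrientedGraph V E) (hconn : G.toSimpleGraph.Connected)
    (H : Matrix V V ℝ) (hsymm : H.IsSymm) (hsupp : G.StrictSupport H)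
    (lam : ℝ) (ψ : V → ℝ) (heig : H.mulVec ψ = lam • ψ)
    (hnorm : ψ ⬝ᵥ ψ = 1)
    (hker : Module.finrank ℝ (LinearMap.ker (H - lam • (1 : Matrix V V ℝ)).mulVecLin) = 1)
    (hψ : ∀ r, ψ r ≠ 0)
    (α : E → ℝ) (hα : (PhiMat G H ψ).mulVec α ∈ G.cycleSpace)
    (ε : ℝ) (hε : 0 < ε) (μ : ℝ → ℝ) (v : ℝ → V → ℂ)
    (heigt : ∀ t ∈ Set.Ioo (-ε) ε,
      (phaseMat G H (t • α)).mulVec (v t) = μ t • v t)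
    (hμ0 : μ 0 = lam) (hv0 : v 0 = fun r => (ψ r : ℂ))
    (hμd : ∀ t ∈ Set.Ioo (-ε) ε, DifferentiableAt ℝ μ t)
    (hμd2 : ∀ t ∈ Set.Ioo (-ε) ε, DifferentiableAt ℝ (deriv μ) t)
    (hvd : ∀ t ∈ Set.Ioo (-ε) ε, DifferentiableAt ℝ v t)
    (hvd2 : ∀ t ∈ Set.Ioo (-ε) ε, DifferentiableAt ℝ (deriv v) t) :
    deriv μ 0 = 0 ∧ deriv (deriv μ) 0 = 2 * (α ⬝ᵥ (PhiMat G H ψ).mulVec α) :=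
  directional_magnetic_hessian_general G H hsymm lam ψ heig hnorm hψ α hα ε hε μ v heigt hμ0 hv0 hμd
    hμd2 hvd hvd2
end

section
/- (Bronski–DeVille–Ferguson index formula.) Let L be a real symmetric n×n matrix strictly supported on the connected graph G whose kernel is spanned by the all-ones vector 𝟏. Let D be the |E|×|E| diagonal matrix with entries D_{(s→t)} = L_{st}, and let C be a frame for the cycle space Z of G. Then n_+(L) = n_-(D) − n_+(−C^⊤ D^{-1} C). -/
open Matrix

/-! With `D = diag (L_{st})`, the form `q(φ) = -∑ₑ φₑ² / Dₑ` on `ℝ^E` is nondegenerate and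
`n₊(q) = n₋(D)`. Since `L = -dᵀ D d`, `q` pulls back along `θ ↦ D dθ` to the form of `L` and
along `y ↦ C y` to the form of `-Cᵀ D⁻¹ C`. The two images are `q`-orthogonal because `dᵀ C = 0`,
and they span `ℝ^E`: they meet only in `0`, as `dᵀ D dθ = 0` forces `θ ∈ ℝ𝟏`, and their
dimensions add up to `|E|`. For such a splitting `n₊` and `n₋` of the two pullbacks add up to at
most those of `q`, while `n₊ + n₋` of each pullback is at least the dimension of its image; so
all these inequalities are equalities. -/

open QuadraticMap

lemma QuadraticMap.radical_comp_le_ker {R M M₁ M₂ P : Type*} [CommRing R] [AddCommGroup M]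
    [Module R M] [AddCommGroup M₁] [Module R M₁] [AddCommGroup M₂] [Module R M₂]
    [AddCommGroup P] [Module R P] {Q : QuadraticMap R M P} {f : M₁ →ₗ[R] M} {g : M₂ →ₗ[R] M}
    (hQ : Q.radical = ⊥) (horth : ∀ x y, Q.IsOrtho (f x) (g y))
    (hspan : LinearMap.range f ⊔ LinearMap.range g = ⊤) :
    (Q.comp f).radical ≤ LinearMap.ker f := by
  rintro x ⟨hx, hxpolar⟩
  suffices f x ∈ Q.radical by simpa [hQ] using this
  refine ⟨hx, ?_⟩
  rw [← LinearMap.ker_eq_top, eq_top_iff, ← hspan]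
  refine sup_le ?_ ?_
  · rintro _ ⟨x', rfl⟩
    simpa [polar] using congr($hxpolar x')
  · rintro _ ⟨y, rfl⟩
    exact isOrtho_polarBilin.2 (horth x y)

namespace QuadraticForm

lemma radical_weightedSumSquares_eq_bot {𝕜 ι : Type*} [Field 𝕜] [NeZero (2 : 𝕜)] [Fintype ι]
    {w : ι → 𝕜} (hw : ∀ i, w i ≠ 0) : (weightedSumSquares 𝕜 w).radical = ⊥ := by
  rw [radical_weightedSumSquares, eq_bot_iff]
  exact fun v hv => funext fun i => Pi.mem_spanSubset_iff.1 hv i (hw i)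

variable {𝕜 M M₁ M₂ M' : Type*} [Field 𝕜] [LinearOrder 𝕜]
  [AddCommGroup M] [Module 𝕜 M]
  [AddCommGroup M₁] [Module 𝕜 M₁] [FiniteDimensional 𝕜 M₁]
  [AddCommGroup M₂] [Module 𝕜 M₂] [FiniteDimensional 𝕜 M₂]
  [AddCommGroup M'] [Module 𝕜 M'] {Q : QuadraticForm 𝕜 M}

lemma finrank_le_sigPos_of_posDef_comp [FiniteDimensional 𝕜 M] {φ : M' →ₗ[𝕜] M}
    (h : (Q.comp φ).PosDef) : Module.finrank 𝕜 M' ≤ sigPos Q := by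
  have hφ : Function.Injective φ := by
    refine (injective_iff_map_eq_zero φ).2 fun x hx => ?_
    by_contra hx0
    simpa [hx] using h x hx0
  rw [← LinearMap.finrank_range_of_inj hφ]
  refine le_sigPos_of_posDef Q fun ⟨v, x, hxv⟩ hv => ?_
  subst hxv
  exact h x fun hx => hv (by simp [hx])

variable [IsStrictOrderedRing 𝕜] {f : M₁ →ₗ[𝕜] M} {g : M₂ →ₗ[𝕜] M}

lemma sigPos_comp_add_sigPos_comp_le [FiniteDimensional 𝕜 M]
    (horth : ∀ x y, Q.IsOrtho (f x) (g y)) :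
    sigPos (Q.comp f) + sigPos (Q.comp g) ≤ sigPos Q := by
  obtain ⟨V₁, hV₁, hpos₁⟩ := exists_finrank_eq_sigPos_and_posDef (Q.comp f)
  obtain ⟨V₂, hV₂, hpos₂⟩ := exists_finrank_eq_sigPos_and_posDef (Q.comp g)
  rw [← hV₁, ← hV₂, ← Module.finrank_prod]
  refine finrank_le_sigPos_of_posDef_comp (φ := (f ∘ₗ V₁.subtype).coprod (g ∘ₗ V₂.subtype))
    fun ⟨x, y⟩ hxy => ?_
  have hsum : (Q.comp ((f ∘ₗ V₁.subtype).coprod (g ∘ₗ V₂.subtype))) (x, y) =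
      (Q.comp f).restrict V₁ x + (Q.comp g).restrict V₂ y := horth x y
  rw [hsum]
  rcases eq_or_ne x 0 with rfl | hx
  · have hy : y ≠ 0 := fun hy => hxy (by simp [hy])
    simpa using hpos₂ y hy
  · exact add_pos_of_pos_of_nonneg (hpos₁ x hx) (hpos₂.nonneg y)

lemma sigNeg_comp_add_sigNeg_comp_le [FiniteDimensional 𝕜 M]
    (horth : ∀ x y, Q.IsOrtho (f x) (g y)) :
    sigNeg (Q.comp f) + sigNeg (Q.comp g) ≤ sigNeg Q := by
  have horth' : ∀ x y, (-Q).IsOrtho (f x) (g y) := fun x y => by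
    have h := horth x y
    rw [isOrtho_def] at h ⊢
    simp only [_root_.neg_apply, h, neg_add]
  rw [← sigPos_neg, ← sigPos_neg, ← sigPos_neg, show -(Q.comp f) = (-Q).comp f by ext; simp,
    show -(Q.comp g) = (-Q).comp g by ext; simp]
  exact sigPos_comp_add_sigPos_comp_le horth'

lemma finrank_range_le_sigPos_add_sigNeg_comp (hf : (Q.comp f).radical ≤ LinearMap.ker f) :
    Module.finrank 𝕜 (LinearMap.range f) ≤ sigPos (Q.comp f) + sigNeg (Q.comp f) := by
  have := Submodule.finrank_mono hf
  have := LinearMap.finrank_range_add_finrank_ker f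
  have := sigPos_add_sigNeg_add_radical (Q := Q.comp f)
  omega

theorem sigPos_comp_add_sigPos_comp_of_isOrtho [FiniteDimensional 𝕜 M] (hQ : Q.radical = ⊥)
    (horth : ∀ x y, Q.IsOrtho (f x) (g y)) (hspan : LinearMap.range f ⊔ LinearMap.range g = ⊤) :
    sigPos (Q.comp f) + sigPos (Q.comp g) = sigPos Q := by
  have hf := finrank_range_le_sigPos_add_sigNeg_comp (radical_comp_le_ker hQ horth hspan)
  have hg := finrank_range_le_sigPos_add_sigNeg_comp
    (radical_comp_le_ker hQ (fun y x => (horth x y).symm) (by rwa [sup_comm]))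
  have hspan_dim := Submodule.finrank_add_le_finrank_add_finrank (LinearMap.range f)
    (LinearMap.range g)
  rw [hspan, finrank_top] at hspan_dim
  have hQdim := sigPos_add_sigNeg_add_radical (Q := Q)
  rw [hQ, finrank_bot] at hQdim
  have := sigPos_comp_add_sigPos_comp_le horth
  have := sigNeg_comp_add_sigNeg_comp_le horth
  omega

end QuadraticForm

namespace Matrix

section QuadraticForm

variable {R m n l : Type*} [CommRing R] [Fintype m] [Fintype n] [Fintype l] [DecidableEq m]

lemma toQuadraticForm'_apply (A : Matrix m m R) (x : m → R) :
    A.toQuadraticForm' x = x ⬝ᵥ A *ᵥ x :=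
  toLinearMap₂'_apply' A x x

lemma toQuadraticForm'_comp_mulVecLin [DecidableEq n] (A : Matrix m m R) (B : Matrix m n R) :
    A.toQuadraticForm'.comp B.mulVecLin = (Bᵀ * A * B).toQuadraticForm' := by
  ext x
  simp [toQuadraticForm'_apply, ← mulVec_mulVec, dotProduct_mulVec, vecMul_transpose]

lemma toQuadraticForm'_diagonal (w : m → R) :
    (diagonal w).toQuadraticForm' = weightedSumSquares R w := by
  ext x
  simp only [toQuadraticForm'_apply, weightedSumSquares_apply, dotProduct, mulVec_diagonal,
    smul_eq_mul]
  exact Finset.sum_congr rfl fun i _ => by ring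

lemma isOrtho_toQuadraticForm'_mulVec {A : Matrix m m R} (hA : A.IsSymm) {B : Matrix m n R}
    {C : Matrix m l R} (h : Bᵀ * A * C = 0) (x : n → R) (y : l → R) :
    A.toQuadraticForm'.IsOrtho (B *ᵥ x) (C *ᵥ y) := by
  have hBC : (B *ᵥ x) ⬝ᵥ A *ᵥ (C *ᵥ y) = 0 := by
    simpa [← mulVec_mulVec, dotProduct_mulVec, vecMul_transpose] using
      congr(x ⬝ᵥ $h *ᵥ y)
  have hCB : (C *ᵥ y) ⬝ᵥ A *ᵥ (B *ᵥ x) = 0 := by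
    rwa [dotProduct_mulVec, ← mulVec_transpose, hA.eq, dotProduct_comm]
  rw [isOrtho_def, toQuadraticForm'_apply, toQuadraticForm'_apply, toQuadraticForm'_apply,
    mulVec_add, dotProduct_add, add_dotProduct, add_dotProduct, hBC, hCB]
  ring

end QuadraticForm

lemma range_mul_sup_ker_transpose_eq_top {K m n : Type*} [Field K] [Fintype m] [Fintype n]
    [DecidableEq m] (A : Matrix m n K) {W : Matrix m m K} (hW : IsUnit W.det)
    (hker : LinearMap.ker (Aᵀ * W * A).mulVecLin ≤ LinearMap.ker A.mulVecLin) :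
    LinearMap.range (W * A).mulVecLin ⊔ LinearMap.ker Aᵀ.mulVecLin = ⊤ := by
  refine Submodule.eq_top_of_disjoint _ _ ?_ ?_
  · have := LinearMap.finrank_range_add_finrank_ker Aᵀ.mulVecLin
    have hrank : (W * A).rank = Aᵀ.rank := by
      rw [rank_mul_eq_right_of_isUnit_det W A hW, rank_transpose]
    rw [rank, rank] at hrank
    omega
  · refine Submodule.disjoint_def.2 fun _ ⟨θ, hθ⟩ hx => ?_
    subst hθ
    have hAθ : A *ᵥ θ = 0 := hker (by simpa [← mulVec_mulVec] using hx)
    simp [hAθ]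

lemma ext_of_apply_of_ne_of_mulVec_one {R n : Type*} [Ring R] [Fintype n] [DecidableEq n]
    {A B : Matrix n n R}
    (hoff : ∀ r s, r ≠ s → A r s = B r s)
    (hrow : A *ᵥ (fun _ => 1) = B *ᵥ (fun _ => 1)) : A = B := by
  have hdiag (M : Matrix n n R) (r : n) :
      M r r = (M *ᵥ fun _ => 1) r - ∑ s ∈ Finset.univ.erase r, M r s := by
    rw [eq_sub_iff_add_eq, Finset.add_sum_erase _ _ (Finset.mem_univ r)]
    simp [mulVec, dotProduct]
  ext r s
  rcases eq_or_ne r s with rfl | hrs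
  · rw [hdiag A, hdiag B, hrow]
    exact congrArg _ (Finset.sum_congr rfl fun s hs => hoff r s (Finset.ne_of_mem_erase hs).symm)
  · exact hoff r s hrs

namespace IsHermitian

variable {m : Type*} [Fintype m] [DecidableEq m] {A : Matrix m m ℝ}

lemma equivalent_weightedSumSquares_eigenvalues (hA : A.IsHermitian) :
    A.toQuadraticForm'.Equivalent (weightedSumSquares ℝ hA.eigenvalues) := by
  set U : Matrix m m ℝ := ↑hA.eigenvectorUnitary
  have hdiag : Uᵀ * A * U = diagonal hA.eigenvalues := by
    simpa [Unitary.conjStarAlgAut_apply, U, star_eq_conjTranspose] using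
      hA.conjStarAlgAut_star_eigenvectorUnitary
  refine .symm ⟨⟨UnitaryGroup.toLinearEquiv hA.eigenvectorUnitary, fun y => ?_⟩⟩
  rw [← toQuadraticForm'_diagonal, ← hdiag, ← toQuadraticForm'_comp_mulVecLin]
  rfl

lemma posEig_eq_sigPos (hA : A.IsHermitian) : posEig A = sigPos A.toQuadraticForm' := by
  rw [posEig, dif_pos hA,
    QuadraticForm.sigPos_of_equiv_weightedSumSquares hA.equivalent_weightedSumSquares_eigenvalues]
  rfl

lemma negEig_eq_sigNeg (hA : A.IsHermitian) : negEig A = sigNeg A.toQuadraticForm' := by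
  rw [negEig, dif_pos hA,
    QuadraticForm.sigNeg_of_equiv_weightedSumSquares hA.equivalent_weightedSumSquares_eigenvalues]
  rfl

end IsHermitian

lemma negEig_diagonal {m : Type*} [Fintype m] [DecidableEq m] (w : m → ℝ) :
    negEig (diagonal w) = {i | w i < 0}.ncard := by
  rw [(isHermitian_diagonal w).negEig_eq_sigNeg, toQuadraticForm'_diagonal,
    QuadraticForm.sigNeg_weightedSumSquares]

end Matrix

namespace OrientedGraph

variable {V E : Type*} (G : OrientedGraph V E)

def Joins (e : E) (r s : V) : Prop :=
  (G.src e = r ∧ G.tgt e = s) ∨ (G.src e = s ∧ G.tgt e = r)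

lemma eq_of_joins {r s : V} {e e' : E} (he : G.Joins e r s) (he' : G.Joins e' r s) : e = e' :=
  G.edgeInj e e' (by unfold Joins at he he'; grind)

variable [DecidableEq V]

lemma cob_mul_cob_of_joins {r s : V} {e : E} (he : G.Joins e r s) :
    G.cob e r * G.cob e s = -1 := by
  have := G.loopless e
  rcases he with ⟨rfl, rfl⟩ | ⟨rfl, rfl⟩ <;> simp [cob, this, this.symm]

lemma cob_mul_cob_of_not_joins {r s : V} (hrs : r ≠ s) {e : E} (he : ¬G.Joins e r s) :
    G.cob e r * G.cob e s = 0 := by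
  simp only [Joins, cob, of_apply] at he ⊢
  split_ifs <;> simp_all

lemma transpose_cob_mul_diagonal_mul_cob_apply [Fintype E] [DecidableEq E] (w : E → ℝ)
    (r s : V) : (G.cobᵀ * diagonal w * G.cob) r s = ∑ e, w e * (G.cob e r * G.cob e s) := by
  rw [mul_apply]
  refine Finset.sum_congr rfl fun e _ => ?_
  rw [mul_diagonal, transpose_apply]
  ring

variable [Fintype V]

lemma cob_mulVec_one : G.cob *ᵥ (fun _ => 1) = 0 := by
  ext e
  simp [cob, mulVec, dotProduct]

lemma ker_le_ker_cob {L : Matrix V V ℝ}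
    (hker : LinearMap.ker L.mulVecLin = Submodule.span ℝ {(fun _ => 1 : V → ℝ)}) :
    LinearMap.ker L.mulVecLin ≤ LinearMap.ker G.cob.mulVecLin := by
  rw [hker, Submodule.span_le, Set.singleton_subset_iff]
  exact G.cob_mulVec_one

variable [Fintype E]

lemma transpose_cob_mul_eq_zero {ι : Type*} [Fintype ι] {C : Matrix E ι ℝ}
    (hC : LinearMap.range C.mulVecLin ≤ G.cycleSpace) : G.cobᵀ * C = 0 :=
  mulVec_injective <| funext fun y => by
    rw [← mulVec_mulVec, zero_mulVec]
    exact hC (LinearMap.mem_range_self C.mulVecLin y)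

variable [DecidableEq E]

theorem eq_transpose_cob_mul_diagonal_mul_cob {L : Matrix V V ℝ} (hsymm : L.IsSymm)
    (hsupp : G.StrictSupport L) (hone : L *ᵥ (fun _ => 1) = 0) :
    L = G.cobᵀ * diagonal (fun e => -L (G.src e) (G.tgt e)) * G.cob := by
  refine ext_of_apply_of_ne_of_mulVec_one (fun r s hrs => ?_) ?_
  · rw [transpose_cob_mul_diagonal_mul_cob_apply]
    by_cases hadj : G.toSimpleGraph.Adj r s
    · obtain ⟨e₀, he₀⟩ := hadj
      rw [Finset.sum_eq_single e₀ (fun e _ he => ?_) (by simp), G.cob_mul_cob_of_joins he₀]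
      · rcases he₀ with ⟨rfl, rfl⟩ | ⟨rfl, rfl⟩
        · ring
        · rw [hsymm.apply]
          ring
      · rw [G.cob_mul_cob_of_not_joins hrs fun he' => he (G.eq_of_joins he' he₀), mul_zero]
    · rw [Finset.sum_eq_zero fun e _ => by
        rw [G.cob_mul_cob_of_not_joins hrs fun he => hadj ⟨e, he⟩, mul_zero]]
      by_contra h
      exact hadj ((hsupp r s hrs).1 h)
  · rw [hone, ← mulVec_mulVec, cob_mulVec_one, mulVec_zero]

theorem sigPos_laplacian_add_sigPos_cycle_eq_ncard {ι : Type*} [Fintype ι] [DecidableEq ι] {w : E → ℝ}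
    (hw : ∀ e, w e ≠ 0)
    (hker : LinearMap.ker (G.cobᵀ * diagonal (fun e => -w e) * G.cob).mulVecLin ≤
      LinearMap.ker G.cob.mulVecLin)
    {C : Matrix E ι ℝ} (hC : LinearMap.range C.mulVecLin = G.cycleSpace) :
    sigPos (G.cobᵀ * diagonal (fun e => -w e) * G.cob).toQuadraticForm' +
        sigPos (-(Cᵀ * diagonal (fun e => (w e)⁻¹) * C)).toQuadraticForm' =
      {e | w e < 0}.ncard := by
  set Q := (diagonal fun e => -(w e)⁻¹).toQuadraticForm'
  have hwQ : diagonal w * diagonal (fun e => -(w e)⁻¹) = -1 := by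
    rw [diagonal_mul_diagonal, ← diagonal_one, diagonal_neg]
    congr 1
    funext e
    field_simp [hw e]
  have horth : (diagonal w * G.cob)ᵀ * diagonal (fun e => -(w e)⁻¹) * C = 0 := by
    rw [transpose_mul, diagonal_transpose, Matrix.mul_assoc G.cobᵀ, hwQ, Matrix.mul_neg,
      Matrix.mul_one, Matrix.neg_mul, G.transpose_cob_mul_eq_zero hC.le, neg_zero]
  have hspan :
      LinearMap.range (diagonal w * G.cob).mulVecLin ⊔ LinearMap.range C.mulVecLin = ⊤ := by
    rw [hC]
    refine range_mul_sup_ker_transpose_eq_top G.cob ?_ fun x hx => hker ?_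
    · rw [det_diagonal]
      exact (Finset.prod_ne_zero_iff.2 fun e _ => hw e).isUnit
    · simpa [← diagonal_neg, neg_mulVec] using hx
  have hQL : Q.comp (diagonal w * G.cob).mulVecLin =
      (G.cobᵀ * diagonal (fun e => -w e) * G.cob).toQuadraticForm' := by
    rw [toQuadraticForm'_comp_mulVecLin, transpose_mul, diagonal_transpose,
      Matrix.mul_assoc G.cobᵀ, hwQ, ← diagonal_neg]
    simp only [Matrix.mul_assoc, Matrix.neg_mul, Matrix.mul_neg, Matrix.one_mul]
  have hQN : Q.comp C.mulVecLin = (-(Cᵀ * diagonal (fun e => (w e)⁻¹) * C)).toQuadraticForm' := by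
    rw [toQuadraticForm'_comp_mulVecLin, ← diagonal_neg, Matrix.mul_neg, Matrix.neg_mul]
  rw [← hQL, ← hQN, QuadraticForm.sigPos_comp_add_sigPos_comp_of_isOrtho ?_
      (isOrtho_toQuadraticForm'_mulVec (isSymm_diagonal _) horth) hspan,
    toQuadraticForm'_diagonal, QuadraticForm.sigPos_weightedSumSquares]
  · simp only [neg_pos, inv_lt_zero]
  · rw [toQuadraticForm'_diagonal]
    exact QuadraticForm.radical_weightedSumSquares_eq_bot fun e =>
      neg_ne_zero.2 (inv_ne_zero (hw e))

end OrientedGraph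

theorem bronski_deville_ferguson_general
    {V E : Type*} [Fintype V] [Fintype E] [DecidableEq V] [DecidableEq E]
    (G : OrientedGraph V E)
    (L : Matrix V V ℝ) (hsymm : L.IsSymm) (hsupp : G.StrictSupport L)
    (hker : LinearMap.ker L.mulVecLin = Submodule.span ℝ {(fun _ => 1 : V → ℝ)})
    {β : ℕ} (C : Matrix E (Fin β) ℝ) (hC : IsFrame G C) :
    posEig L +
        posEig (-(Cᵀ * (Matrix.diagonal fun e => L (G.src e) (G.tgt e))⁻¹ * C)) =
      negEig (Matrix.diagonal fun e => L (G.src e) (G.tgt e)) := by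
  set w : E → ℝ := fun e => L (G.src e) (G.tgt e)
  have hw : ∀ e, w e ≠ 0 := fun e => (hsupp _ _ (G.loopless e)).2 ⟨e, .inl ⟨rfl, rfl⟩⟩
  have hDinv : (diagonal w)⁻¹ = diagonal fun e => (w e)⁻¹ :=
    inv_eq_right_inv (by simp [diagonal_mul_diagonal, hw])
  have hL : L = G.cobᵀ * diagonal (fun e => -w e) * G.cob :=
    G.eq_transpose_cob_mul_diagonal_mul_cob hsymm hsupp
      (LinearMap.mem_ker.1 (hker.ge (Submodule.mem_span_singleton_self _)))
  have hN : (-(Cᵀ * (diagonal w)⁻¹ * C)).IsHermitian := by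
    simpa using (isHermitian_conjTranspose_mul_mul C (isHermitian_diagonal w).inv).neg
  rw [(isHermitian_iff_isSymm.2 hsymm).posEig_eq_sigPos, hN.posEig_eq_sigPos, negEig_diagonal,
    hDinv, hL]
  exact G.sigPos_laplacian_add_sigPos_cycle_eq_ncard hw (hL ▸ G.ker_le_ker_cob hker) hC.2

/-- the Bronski–DeVille–Ferguson index formula
`n₊(L) = n₋(D) - n₊(-Cᵀ D⁻¹ C)`. -/
theorem bronski_deville_ferguson
    {V E : Type*} [Fintype V] [Fintype E] [DecidableEq V] [DecidableEq E]
    (G : OrientedGraph V E) (hconn : G.toSimpleGraph.Connected)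
    (L : Matrix V V ℝ) (hsymm : L.IsSymm) (hsupp : G.StrictSupport L)
    (hker : LinearMap.ker L.mulVecLin = Submodule.span ℝ {(fun _ => 1 : V → ℝ)})
    {β : ℕ} (C : Matrix E (Fin β) ℝ) (hC : IsFrame G C) :
    posEig L +
        posEig (-(Cᵀ * (Matrix.diagonal fun e => L (G.src e) (G.tgt e))⁻¹ * C)) =
      negEig (Matrix.diagonal fun e => L (G.src e) (G.tgt e)) :=
  bronski_deville_ferguson_general G L hsymm hsupp hker C hC
end

section
/- Let H be a real symmetric n×n matrix strictly supported on the connected graph G, let λ ∈ ℝ and ψ ∈ ℝ^V satisfy Hψ = λψ with dim ker(H − λI) = 1 and ψ_r ≠ 0 for every vertex r. Then the kernel of the symmetric matrix d^⊤ Φ d (acting on ℝ^V) is one-dimensional and is spanned by the all-ones vector 𝟏. -/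
open Matrix

/-! Put `M = D_ψ H D_ψ` with `D_ψ = diagonal ψ`. Then `Φ` has the entries `-M_{rs}` on the edges,
so `dᵀ Φ d` is the weighted Laplacian of `G` with those weights, which (as `M` is symmetric and
supported on `G`) is `M` minus the diagonal of its row sums. Since `Hψ = λψ`, the row sums are
`λ ψ_r²`, whence `dᵀ Φ d = D_ψ (H - λ) D_ψ`. As `D_ψ` is invertible, the kernel is
`D_ψ⁻¹ ker (H - λ) = D_ψ⁻¹ span {ψ} = span {𝟏}`. -/

namespace Matrix

variable {n R : Type*} [Fintype n] [DecidableEq n] [CommRing R]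

theorem ker_mulVecLin_mul_mul_of_isUnit {P : Matrix n n R} (hP : IsUnit P) (A Q : Matrix n n R) :
    LinearMap.ker (P * A * Q).mulVecLin = (LinearMap.ker A.mulVecLin).comap Q.mulVecLin := by
  ext x
  simp only [LinearMap.mem_ker, Submodule.mem_comap, mulVecLin_apply, ← mulVec_mulVec]
  exact (mulVec_injective_of_isUnit hP).eq_iff' (mulVec_zero P)

theorem map_diagonal_span_const_one (ψ : n → R) :
    (Submodule.span R {fun _ => 1}).map (diagonal ψ).mulVecLin = Submodule.span R {ψ} := by
  rw [Submodule.map_span, Set.image_singleton, mulVecLin_apply]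
  congr
  ext r
  simp [mulVec_diagonal]

end Matrix

namespace OrientedGraph

variable {V E : Type*} (G : OrientedGraph V E)

theorem sum_edges_add_swap [Fintype V] [Fintype E] {M : Type*} [AddCommMonoid M]
    {f : V → V → M} (hf : ∀ r s, ¬ G.toSimpleGraph.Adj r s → f r s = 0) :
    ∑ e, (f (G.src e) (G.tgt e) + f (G.tgt e) (G.src e)) = ∑ r, ∑ s, f r s := by
  let ends : E ⊕ E → V × V :=
    Sum.elim (fun e => (G.src e, G.tgt e)) (fun e => (G.tgt e, G.src e))
  have hends : Function.Injective ends := by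
    rintro (e | e) (e' | e') h <;> simp only [ends, Sum.elim_inl, Sum.elim_inr, Prod.mk.injEq] at h
    · rw [G.edgeInj e e' (Or.inl h)]
    · exact absurd (G.edgeInj e e' (Or.inr h) ▸ h.1) (G.loopless e)
    · exact absurd (G.edgeInj e e' (Or.inr h.symm) ▸ h.1) (G.loopless e').symm
    · rw [G.edgeInj e e' (Or.inl ⟨h.2, h.1⟩)]
  have hsum := Fintype.sum_of_injective ends hends (fun x => f (ends x).1 (ends x).2)
    (fun p => f p.1 p.2) ?_ fun _ => rfl
  · rw [Fintype.sum_sum_type, Fintype.sum_prod_type] at hsum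
    rw [Finset.sum_add_distrib, ← hsum]
    rfl
  rintro ⟨r, s⟩ hrs
  refine hf r s ?_
  rintro ⟨e, (⟨rfl, rfl⟩ | ⟨rfl, rfl⟩)⟩
  exacts [hrs ⟨Sum.inl e, rfl⟩, hrs ⟨Sum.inr e, rfl⟩]

theorem cob_mulVec [Fintype V] [DecidableEq V] (θ : V → ℝ) :
    G.cob *ᵥ θ = fun e => θ (G.tgt e) - θ (G.src e) := by
  ext e
  simp [cob, mulVec, dotProduct, sub_mul]

theorem cob_transpose_mul_diagonal_mul_cob [Fintype V] [Fintype E] [DecidableEq V]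
    [DecidableEq E] {M : Matrix V V ℝ} (hM : G.Support M) (hsymm : M.IsSymm) :
    G.cobᵀ * diagonal (fun e => -M (G.src e) (G.tgt e)) * G.cob = M - diagonal (M *ᵥ 1) := by
  refine (Matrix.toLinearMap₂' ℝ (S₁ := ℝ) (S₂ := ℝ)).injective <| LinearMap.ext₂ fun x y => ?_
  simp only [Matrix.toLinearMap₂'_apply']
  -- `∑ r, ∑ s, f r s` is the form of `M - diagonal (M *ᵥ 1)`, and by the symmetry of `M`,
  -- `f r s + f s r = -M r s * (x s - x r) * (y s - y r)` is the term of an edge `r → s`.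
  let f : V → V → ℝ := fun r s => M r s * x r * (y s - y r)
  have hf : ∀ r s, ¬ G.toSimpleGraph.Adj r s → f r s = 0 := by
    intro r s hrs
    rcases eq_or_ne r s with rfl | hne
    · simp [f]
    · simp [f, not_ne_iff.mp (mt (hM r s hne) hrs)]
  calc x ⬝ᵥ (G.cobᵀ * diagonal (fun e => -M (G.src e) (G.tgt e)) * G.cob) *ᵥ y
      = ∑ e, (f (G.src e) (G.tgt e) + f (G.tgt e) (G.src e)) := by
        rw [← mulVec_mulVec, ← mulVec_mulVec, dotProduct_mulVec, vecMul_transpose,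
          cob_mulVec, cob_mulVec]
        simp only [dotProduct, mulVec_diagonal, f, hsymm.apply (G.src _)]
        exact Finset.sum_congr rfl fun e _ => by ring
    _ = ∑ r, ∑ s, f r s := G.sum_edges_add_swap hf
    _ = x ⬝ᵥ (M - diagonal (M *ᵥ 1)) *ᵥ y := by
        simp only [f, mul_sub, Finset.sum_sub_distrib, sub_mulVec, dotProduct_sub]
        congr 1
        · simp only [dotProduct, mulVec, Finset.mul_sum]
          exact Finset.sum_congr rfl fun r _ => Finset.sum_congr rfl fun s _ => by ring
        · simp only [dotProduct, mulVec_diagonal]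
          simp only [mulVec, dotProduct, Pi.one_apply, mul_one, Finset.sum_mul, Finset.mul_sum]
          exact Finset.sum_congr rfl fun r _ => Finset.sum_congr rfl fun s _ => by ring

variable {G} in
theorem StrictSupport.support {H : Matrix V V ℝ} (h : G.StrictSupport H) : G.Support H :=
  fun r s hrs => (h r s hrs).mp

variable {G} in
theorem Support.diagonal_mul_mul_diagonal [Fintype V] [DecidableEq V] {H : Matrix V V ℝ}
    (h : G.Support H) (ψ : V → ℝ) : G.Support (diagonal ψ * H * diagonal ψ) := by
  intro r s hrs hψH
  simp only [mul_diagonal, diagonal_mul] at hψH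
  exact h r s hrs (right_ne_zero_of_mul (left_ne_zero_of_mul hψH))

theorem cob_transpose_mul_PhiMat_mul_cob [Fintype V] [Fintype E] [DecidableEq V]
    [DecidableEq E] {H : Matrix V V ℝ} (hsymm : H.IsSymm) (hsupp : G.Support H) {lam : ℝ}
    {ψ : V → ℝ} (heig : H *ᵥ ψ = lam • ψ) :
    G.cobᵀ * PhiMat G H ψ * G.cob = diagonal ψ * (H - lam • 1) * diagonal ψ := by
  have hsymm' : (diagonal ψ * H * diagonal ψ).IsSymm := by
    simp only [IsSymm, transpose_mul, diagonal_transpose, hsymm.eq, Matrix.mul_assoc]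
  have hrowsum : (diagonal ψ * H * diagonal ψ) *ᵥ 1 = fun r => ψ r * lam * ψ r := by
    have hD1 : diagonal ψ *ᵥ 1 = ψ := funext fun r => by simp [mulVec_diagonal]
    ext r
    rw [← mulVec_mulVec, ← mulVec_mulVec, hD1, heig, mulVec_diagonal, Pi.smul_apply, smul_eq_mul,
      mul_assoc]
  have hLap := G.cob_transpose_mul_diagonal_mul_cob (hsupp.diagonal_mul_mul_diagonal ψ) hsymm'
  rw [hrowsum] at hLap
  simp only [mul_diagonal, diagonal_mul] at hLap
  rw [PhiMat, hLap, mul_sub, sub_mul, smul_one_eq_diagonal, diagonal_mul_diagonal,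
    diagonal_mul_diagonal]

end OrientedGraph

theorem kernel_of_dT_Phi_d_general
    {V E : Type*} [Fintype V] [Fintype E] [DecidableEq V] [DecidableEq E]
    (G : OrientedGraph V E)
    (H : Matrix V V ℝ) (hsymm : H.IsSymm) (hsupp : G.StrictSupport H)
    (lam : ℝ) (ψ : V → ℝ) (heig : H.mulVec ψ = lam • ψ)
    (hker : Module.finrank ℝ (LinearMap.ker (H - lam • (1 : Matrix V V ℝ)).mulVecLin) = 1)
    (hψ : ∀ r, ψ r ≠ 0) :
    LinearMap.ker ((G.cob)ᵀ * PhiMat G H ψ * G.cob).mulVecLin =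
      Submodule.span ℝ {(fun _ => 1 : V → ℝ)} ∧
    Module.finrank ℝ
      (LinearMap.ker ((G.cob)ᵀ * PhiMat G H ψ * G.cob).mulVecLin) = 1 := by
  have : Nonempty V := by
    have hle := Submodule.finrank_le (LinearMap.ker (H - lam • (1 : Matrix V V ℝ)).mulVecLin)
    rw [hker, Module.finrank_fintype_fun_eq_card] at hle
    exact Fintype.card_pos_iff.mp hle
  have hψ0 : ψ ≠ 0 := fun h => hψ (Classical.arbitrary V) (congrFun h _)
  have hDψ : IsUnit (diagonal ψ) := isUnit_diagonal.mpr (Pi.isUnit_iff.mpr fun r => (hψ r).isUnit)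
  have heigenspace :
      LinearMap.ker (H - lam • (1 : Matrix V V ℝ)).mulVecLin = Submodule.span ℝ {ψ} :=
    eq_span_singleton_of_mem_of_finrank_eq_one hker (by simp [heig]) hψ0
  have hK : LinearMap.ker ((G.cob)ᵀ * PhiMat G H ψ * G.cob).mulVecLin =
      Submodule.span ℝ {(fun _ => 1 : V → ℝ)} := by
    rw [G.cob_transpose_mul_PhiMat_mul_cob hsymm hsupp.support heig,
      ker_mulVecLin_mul_mul_of_isUnit hDψ, heigenspace, ← map_diagonal_span_const_one,
      Submodule.comap_map_eq_of_injective (mulVec_injective_of_isUnit hDψ)]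
  have h1 : (fun _ => 1 : V → ℝ) ≠ 0 := Function.ne_iff.mpr ⟨Classical.arbitrary V, one_ne_zero⟩
  exact ⟨hK, hK ▸ finrank_span_singleton h1⟩

/-- the kernel of `dᵀ Φ d` is one-dimensional, spanned by the all-ones
vector. -/
theorem kernel_of_dT_Phi_d
    {V E : Type*} [Fintype V] [Fintype E] [DecidableEq V] [DecidableEq E]
    (G : OrientedGraph V E) (hconn : G.toSimpleGraph.Connected)
    (H : Matrix V V ℝ) (hsymm : H.IsSymm) (hsupp : G.StrictSupport H)
    (lam : ℝ) (ψ : V → ℝ) (heig : H.mulVec ψ = lam • ψ)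
    (hker : Module.finrank ℝ (LinearMap.ker (H - lam • (1 : Matrix V V ℝ)).mulVecLin) = 1)
    (hψ : ∀ r, ψ r ≠ 0) :
    LinearMap.ker ((G.cob)ᵀ * PhiMat G H ψ * G.cob).mulVecLin =
      Submodule.span ℝ {(fun _ => 1 : V → ℝ)} ∧
    Module.finrank ℝ
      (LinearMap.ker ((G.cob)ᵀ * PhiMat G H ψ * G.cob).mulVecLin) = 1 :=
  kernel_of_dT_Phi_d_general G H hsymm hsupp lam ψ heig hker hψ
end
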